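/- arXiv:2110.04661 — 6 statements merged into one kernel-verified Lean document; each statement's English description precedes it below -/
import Mathlib

section
/- Let E be a real inner product space, f : E → ℝ continuously differentiable with ‖∇f(x)‖ ≤ 1 for all x ∈ E, let b > 0, and let γ : [0,b] → E be a C¹ curve with γ(0) = γ(b). Then ∫₀^b ( (1/2)‖γ'(u) − 2u·∇f(γ(u))‖² + 2u²(1 − ‖∇f(γ(u))‖²) ) du ≥ b³/6. (This is the core integral inequality, in the Euclidean-space model, of Lemma 2.1, which asserts that the static reduced length of a steady soliton satisfies λ(o,τ) ≥ τ/12; here b = √τ and the integrand is the reparametrized L-length integrand.) -/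
open Set MeasureTheory intervalIntegral

/-!
Put `h = f ∘ γ`, so that `h' = ⟪∇f(γ), γ'⟫` and `|h'| ≤ ‖γ'‖`. Expanding the square, the
integrand is `½‖γ'‖² - 2u h' + 2u²`. Integrating by parts, and using `h 0 = h b`, the term
`-2u h'` may be replaced by `2 (h u - h 0)`. Since `h` returns to its initial value, the
length `L = ∫ ‖γ'‖` both before and after `u` bounds `|h u - h 0|`, so
`2 (h u - h 0) ≥ -L`. With `½‖γ'‖² ≥ b‖γ'‖ - b²/2`, the integral is at least
`bL - b³/2 - bL + 2b³/3 = b³/6`.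
-/

theorem HasGradientAt.comp_hasDerivWithinAt {E : Type*} [NormedAddCommGroup E]
    [InnerProductSpace ℝ E] [CompleteSpace E] {f : E → ℝ} {f' : E} {γ : ℝ → E} {γ' : E}
    {s : Set ℝ} {t : ℝ} (hf : HasGradientAt f f' (γ t)) (hγ : HasDerivWithinAt γ γ' s t) :
    HasDerivWithinAt (f ∘ γ) (inner ℝ f' γ') s t := by
  simpa [InnerProductSpace.toDual_apply_apply] using hf.hasFDerivAt.comp_hasDerivWithinAt t hγ

theorem half_norm_sub_two_smul_sq_add_eq {E : Type*} [NormedAddCommGroup E]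
    [InnerProductSpace ℝ E] (x y : E) (t : ℝ) :
    1 / 2 * ‖x - (2 * t) • y‖ ^ 2 + 2 * t ^ 2 * (1 - ‖y‖ ^ 2)
      = 1 / 2 * ‖x‖ ^ 2 - 2 * t * inner ℝ y x + 2 * t ^ 2 := by
  rw [norm_sub_sq_real, real_inner_smul_right, norm_smul, mul_pow, Real.norm_eq_abs, sq_abs,
    real_inner_comm]
  ring

theorem integral_eq_sub_of_hasDerivWithinAt_Icc {E : Type*} [NormedAddCommGroup E]
    [NormedSpace ℝ E] [CompleteSpace E] {f f' : ℝ → E} {a b : ℝ} (hab : a ≤ b)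
    (hf : ∀ x ∈ Icc a b, HasDerivWithinAt f (f' x) (Icc a b) x)
    (hf' : IntervalIntegrable f' volume a b) :
    ∫ x in a..b, f' x = f b - f a :=
  integral_eq_sub_of_hasDerivAt_of_le hab (fun x hx => (hf x hx).continuousWithinAt)
    (fun x hx => (hf x (Ioo_subset_Icc_self hx)).hasDerivAt (Icc_mem_nhds hx.1 hx.2)) hf'

theorem abs_sub_le_integral_of_abs_deriv_le {h h' v : ℝ → ℝ} {a b : ℝ} (hab : a ≤ b)
    (hh : ∀ x ∈ Icc a b, HasDerivWithinAt h (h' x) (Icc a b) x)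
    (hh' : IntervalIntegrable h' volume a b) (hv : IntervalIntegrable v volume a b)
    (hle : ∀ x ∈ Icc a b, |h' x| ≤ v x) :
    |h b - h a| ≤ ∫ x in a..b, v x := by
  rw [← integral_eq_sub_of_hasDerivWithinAt_Icc hab hh hh', ← Real.norm_eq_abs]
  exact norm_integral_le_of_norm_le hab
    (Filter.Eventually.of_forall fun x hx => hle x (Ioc_subset_Icc_self hx)) hv

theorem two_mul_abs_sub_le_integral_of_abs_deriv_le {h h' v : ℝ → ℝ} {a b u : ℝ}
    (hu : u ∈ Icc a b) (hh : ∀ x ∈ Icc a b, HasDerivWithinAt h (h' x) (Icc a b) x)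
    (hh' : IntervalIntegrable h' volume a b) (hv : IntervalIntegrable v volume a b)
    (hle : ∀ x ∈ Icc a b, |h' x| ≤ v x) (hloop : h a = h b) :
    2 * |h u - h a| ≤ ∫ x in a..b, v x := by
  have hau : Icc a u ⊆ Icc a b := Icc_subset_Icc_right hu.2
  have hub : Icc u b ⊆ Icc a b := Icc_subset_Icc_left hu.1
  have hau' : uIcc a u ⊆ uIcc a b := uIcc_subset_uIcc left_mem_uIcc (mem_uIcc_of_le hu.1 hu.2)
  have hub' : uIcc u b ⊆ uIcc a b := uIcc_subset_uIcc (mem_uIcc_of_le hu.1 hu.2) right_mem_uIcc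
  have before := abs_sub_le_integral_of_abs_deriv_le hu.1
    (fun x hx => (hh x (hau hx)).mono hau) (hh'.mono_set hau') (hv.mono_set hau')
    (fun x hx => hle x (hau hx))
  have after := abs_sub_le_integral_of_abs_deriv_le hu.2
    (fun x hx => (hh x (hub hx)).mono hub) (hh'.mono_set hub') (hv.mono_set hub')
    (fun x hx => hle x (hub hx))
  rw [← hloop, abs_sub_comm] at after
  rw [← integral_add_adjacent_intervals (hv.mono_set hau') (hv.mono_set hub')]
  linarith

theorem cube_div_six_le_integral_of_abs_deriv_le {h h' v : ℝ → ℝ} {b : ℝ} (hb : 0 ≤ b)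
    (hh : ∀ x ∈ Icc 0 b, HasDerivWithinAt h (h' x) (Icc 0 b) x)
    (hh' : ContinuousOn h' (Icc 0 b)) (hv : ContinuousOn v (Icc 0 b))
    (hle : ∀ x ∈ Icc 0 b, |h' x| ≤ v x) (hloop : h 0 = h b) :
    b ^ 3 / 6 ≤ ∫ x in 0..b, (1 / 2 * v x ^ 2 - 2 * x * h' x + 2 * x ^ 2) := by
  have hIcc : uIcc 0 b = Icc 0 b := uIcc_of_le hb
  have hcont : ContinuousOn h (Icc 0 b) := fun x hx => (hh x hx).continuousWithinAt
  have hv_int : IntervalIntegrable v volume 0 b := hv.intervalIntegrable_of_Icc hb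
  set L := ∫ x in 0..b, v x
  -- `G'` is the derivative of `2 x (h x - h 0)`, which vanishes at both ends.
  set G' := fun x => 2 * (h x - h 0) + 2 * x * h' x
  have hG' : ∫ x in 0..b, G' x = 0 := by
    have ibp := integral_deriv_mul_eq_sub_of_hasDerivWithinAt (a := 0) (b := b)
      (u := fun x => 2 * x) (v := fun x => h x - h 0) (u' := fun _ => 2)
      (fun x _ => by simpa using (hasDerivWithinAt_id x _).const_mul 2)
      (fun x hx => (hh x (hIcc ▸ hx) |>.sub_const (h 0)).mono hIcc.subset)
      intervalIntegrable_const (hh'.intervalIntegrable_of_Icc hb)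
    simpa [G', ← hloop] using ibp
  have hpointwise : ∀ x ∈ Icc 0 b, b * v x - (b ^ 2 / 2 + L) + 2 * x ^ 2
      ≤ (1 / 2 * v x ^ 2 - 2 * x * h' x + 2 * x ^ 2) + G' x := by
    intro x hx
    have hvar := two_mul_abs_sub_le_integral_of_abs_deriv_le hx hh
      (hh'.intervalIntegrable_of_Icc hb) hv_int hle hloop
    have habs := neg_abs_le (h x - h 0)
    nlinarith [sq_nonneg (v x - b)]
  have hlower : ∫ x in 0..b, (b * v x - (b ^ 2 / 2 + L) + 2 * x ^ 2) = b ^ 3 / 6 := by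
    rw [integral_add ((hv_int.const_mul b).sub intervalIntegrable_const)
        ((by fun_prop : Continuous fun x : ℝ => 2 * x ^ 2).intervalIntegrable 0 b),
      integral_sub (hv_int.const_mul b) intervalIntegrable_const,
      intervalIntegral.integral_const_mul, intervalIntegral.integral_const,
      intervalIntegral.integral_const_mul, integral_pow]
    simp only [smul_eq_mul, sub_zero]
    ring
  have hintegrand : IntervalIntegrable (fun x => 1 / 2 * v x ^ 2 - 2 * x * h' x + 2 * x ^ 2)
      volume 0 b :=
    ContinuousOn.intervalIntegrable_of_Icc hb (by fun_prop)
  have hG'_int : IntervalIntegrable G' volume 0 b :=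
    ContinuousOn.intervalIntegrable_of_Icc hb (by fun_prop)
  calc b ^ 3 / 6 = ∫ x in 0..b, (b * v x - (b ^ 2 / 2 + L) + 2 * x ^ 2) := hlower.symm
    _ ≤ ∫ x in 0..b, ((1 / 2 * v x ^ 2 - 2 * x * h' x + 2 * x ^ 2) + G' x) :=
      integral_mono_on hb (ContinuousOn.intervalIntegrable_of_Icc hb (by fun_prop))
        (hintegrand.add hG'_int) hpointwise
    _ = ∫ x in 0..b, (1 / 2 * v x ^ 2 - 2 * x * h' x + 2 * x ^ 2) := by
      rw [integral_add hintegrand hG'_int, hG', add_zero]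

/-- Euclidean-space model of the core integral inequality in Lemma 2.1:
for a C¹ loop `γ : [0,b] → E` and `f` continuously differentiable with `‖∇f‖ ≤ 1`,
the reparametrized L-length of the loop is at least `b³/6`. -/
theorem loop_L_length_lower_bound
    {E : Type*} [NormedAddCommGroup E] [InnerProductSpace ℝ E] [CompleteSpace E]
    (f : E → ℝ) (hf : ContDiff ℝ 1 f) (hgrad : ∀ x, ‖gradient f x‖ ≤ 1)
    (b : ℝ) (hb : 0 < b) (γ γ' : ℝ → E)
    (hγ : ∀ u ∈ Icc (0:ℝ) b, HasDerivWithinAt γ (γ' u) (Icc (0:ℝ) b) u)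
    (hγ' : ContinuousOn γ' (Icc (0:ℝ) b))
    (hloop : γ 0 = γ b) :
    b ^ 3 / 6 ≤ ∫ u in (0:ℝ)..b,
      ((1/2) * ‖γ' u - (2 * u) • gradient f (γ u)‖ ^ 2
        + 2 * u ^ 2 * (1 - ‖gradient f (γ u)‖ ^ 2)) := by
  have hgrad_cont : Continuous (gradient f) :=
    (InnerProductSpace.toDual ℝ E).symm.continuous.comp (hf.continuous_fderiv one_ne_zero)
  have hγ_cont : ContinuousOn γ (Icc 0 b) := fun u hu => (hγ u hu).continuousWithinAt
  have hchain : ∀ u ∈ Icc 0 b,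
      HasDerivWithinAt (f ∘ γ) (inner ℝ (gradient f (γ u)) (γ' u)) (Icc 0 b) u :=
    fun u hu => ((hf.differentiable one_ne_zero _).hasGradientAt).comp_hasDerivWithinAt (hγ u hu)
  have hslope : ∀ u ∈ Icc (0:ℝ) b, |inner ℝ (gradient f (γ u)) (γ' u)| ≤ ‖γ' u‖ := fun u _ =>
    (abs_real_inner_le_norm _ _).trans (mul_le_of_le_one_left (norm_nonneg _) (hgrad _))
  simpa only [half_norm_sub_two_smul_sq_add_eq] using
    cube_div_six_le_integral_of_abs_deriv_le hb.le hchain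
      ((hgrad_cont.comp_continuousOn hγ_cont).inner hγ') hγ'.norm hslope (congrArg f hloop)
end

section
/- Let E be a real inner product space, f : E → ℝ continuously differentiable with ‖∇f(x)‖ ≤ 1 for all x ∈ E, let b > 0, and let γ : [0,b] → E be a C¹ curve with γ(0) = γ(b). Then ∫₀^b ( (1/2)‖γ'(u) − 2u·∇f(γ(u))‖² + 2u²(1 − ‖∇f(γ(u))‖²) ) du = (2/3)b³ + ∫₀^b ( (1/2)‖γ'(u)‖² + 2( f(γ(u)) − f(γ(0)) ) ) du. (This expansion identity, obtained by the chain rule and integration by parts using that γ is a loop, is the key algebraic step in the proof of Lemma 2.1.) -/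
/-!
Expanding the square, the integrand on the left equals `½‖γ'‖² − 2u⟪∇f(γ), γ'⟫ + 2u²`; the
`‖∇f‖²` terms cancel. By the chain rule `⟪∇f(γ u), γ' u⟫` is the derivative of `f ∘ γ`, so
integrating `u · (f ∘ γ)'` by parts gives `b f(γ b) − ∫₀ᵇ f ∘ γ`. Since `γ b = γ 0`, the boundary
term is `b f(γ 0)`, which turns `∫₀ᵇ 2f(γ u)` into `∫₀ᵇ 2(f(γ u) − f(γ 0))`, and `∫₀ᵇ 2u² = ⅔ b³`.
-/

open Set MeasureTheory

section

variable {E : Type*} [NormedAddCommGroup E] [InnerProductSpace ℝ E]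

theorem half_norm_sub_two_smul_sq_add (v g : E) (t : ℝ) :
    (1/2) * ‖v - (2 * t) • g‖ ^ 2 + 2 * t ^ 2 * (1 - ‖g‖ ^ 2)
      = (1/2) * ‖v‖ ^ 2 - 2 * (t * inner ℝ g v) + 2 * t ^ 2 := by
  rw [norm_sub_sq_real, real_inner_smul_right, norm_smul, real_inner_comm, mul_pow,
    Real.norm_eq_abs, sq_abs]
  ring

variable [CompleteSpace E] {f : E → ℝ}

theorem ContDiff.continuous_gradient {n : WithTop ℕ∞} (hf : ContDiff ℝ n f) (hn : n ≠ 0) :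
    Continuous (gradient f) :=
  (InnerProductSpace.toDual ℝ E).symm.continuous.comp (hf.continuous_fderiv hn)

theorem hasDerivWithinAt_comp_inner_gradient {γ : ℝ → E} {v : E} {s : Set ℝ}
    {u : ℝ} (hf : DifferentiableAt ℝ f (γ u)) (hγ : HasDerivWithinAt γ v s u) :
    HasDerivWithinAt (fun t => f (γ t)) (inner ℝ (gradient f (γ u)) v) s u := by
  rw [inner_gradient_left]
  exact hf.hasFDerivAt.comp_hasDerivWithinAt u hγ

theorem integral_mul_inner_gradient_eq (hf : ContDiff ℝ 1 f) {γ γ' : ℝ → E} {a b : ℝ}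
    (hγ : ∀ u ∈ uIcc a b, HasDerivWithinAt γ (γ' u) (uIcc a b) u)
    (hγ' : ContinuousOn γ' (uIcc a b)) :
    ∫ u in a..b, u * inner ℝ (gradient f (γ u)) (γ' u)
      = b * f (γ b) - a * f (γ a) - ∫ u in a..b, f (γ u) := by
  have hγc : ContinuousOn γ (uIcc a b) := fun u hu => (hγ u hu).continuousWithinAt
  have hfc := hf.continuous
  have hgradc := hf.continuous_gradient one_ne_zero
  have hcomp : ∀ u ∈ uIcc a b, HasDerivWithinAt (fun t => f (γ t))
      (inner ℝ (gradient f (γ u)) (γ' u)) (uIcc a b) u := fun u hu =>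
    hasDerivWithinAt_comp_inner_gradient (hf.differentiable one_ne_zero (γ u)) (hγ u hu)
  simpa using intervalIntegral.integral_mul_deriv_eq_deriv_mul_of_hasDerivWithinAt
    (fun u _ => (hasDerivAt_id u).hasDerivWithinAt) hcomp intervalIntegrable_const
    (ContinuousOn.intervalIntegrable (by fun_prop))

end

theorem loop_L_length_expansion_general
    {E : Type*} [NormedAddCommGroup E] [InnerProductSpace ℝ E] [CompleteSpace E]
    (f : E → ℝ) (hf : ContDiff ℝ 1 f)
    (b : ℝ) (hb : 0 < b) (γ γ' : ℝ → E)
    (hγ : ∀ u ∈ Icc (0:ℝ) b, HasDerivWithinAt γ (γ' u) (Icc (0:ℝ) b) u)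
    (hγ' : ContinuousOn γ' (Icc (0:ℝ) b))
    (hloop : γ 0 = γ b) :
    (∫ u in (0:ℝ)..b,
      ((1/2) * ‖γ' u - (2 * u) • gradient f (γ u)‖ ^ 2
        + 2 * u ^ 2 * (1 - ‖gradient f (γ u)‖ ^ 2)))
      = (2/3) * b ^ 3
        + ∫ u in (0:ℝ)..b, ((1/2) * ‖γ' u‖ ^ 2 + 2 * (f (γ u) - f (γ 0))) := by
  rw [← uIcc_of_le hb.le] at hγ hγ'
  have hγc : ContinuousOn γ (uIcc 0 b) := fun u hu => (hγ u hu).continuousWithinAt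
  have hfc := hf.continuous
  have hgradc := hf.continuous_gradient one_ne_zero
  have hint : ∀ g : ℝ → ℝ, ContinuousOn g (uIcc 0 b) → IntervalIntegrable g volume 0 b :=
    fun g hg => hg.intervalIntegrable
  have hleft : ∫ u in (0:ℝ)..b,
      ((1/2) * ‖γ' u‖ ^ 2 - 2 * (u * inner ℝ (gradient f (γ u)) (γ' u)) + 2 * u ^ 2)
      = (1/2) * (∫ u in (0:ℝ)..b, ‖γ' u‖ ^ 2)
        - 2 * (∫ u in (0:ℝ)..b, u * inner ℝ (gradient f (γ u)) (γ' u)) + (2/3) * b ^ 3 := by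
    rw [intervalIntegral.integral_add, intervalIntegral.integral_sub]
    · simp only [intervalIntegral.integral_const_mul, integral_pow]
      ring
    all_goals exact hint _ (by fun_prop)
  have hright : ∫ u in (0:ℝ)..b, ((1/2) * ‖γ' u‖ ^ 2 + 2 * (f (γ u) - f (γ 0)))
      = (1/2) * (∫ u in (0:ℝ)..b, ‖γ' u‖ ^ 2) + 2 * (∫ u in (0:ℝ)..b, f (γ u))
        - 2 * (b * f (γ 0)) := by
    rw [intervalIntegral.integral_add, intervalIntegral.integral_const_mul,
      intervalIntegral.integral_const_mul, intervalIntegral.integral_sub,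
      intervalIntegral.integral_const, smul_eq_mul, sub_zero]
    · ring
    all_goals first
      | exact intervalIntegrable_const
      | exact hint _ (by fun_prop)
  simp_rw [half_norm_sub_two_smul_sq_add]
  rw [hleft, hright, integral_mul_inner_gradient_eq hf hγ hγ', ← hloop]
  ring

/-- The expansion identity for the reparametrized L-length of a C¹ loop
`γ : [0,b] → E` (the key algebraic step in the proof of Lemma 2.1): using the chain rule
and integration by parts on the loop,
`∫₀ᵇ ( ½‖γ' − 2u∇f(γ)‖² + 2u²(1 − ‖∇f(γ)‖²) ) = (2/3)b³ + ∫₀ᵇ ( ½‖γ'‖² + 2(f(γ) − f(γ(0))) )`. -/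
theorem loop_L_length_expansion
    {E : Type*} [NormedAddCommGroup E] [InnerProductSpace ℝ E] [CompleteSpace E]
    (f : E → ℝ) (hf : ContDiff ℝ 1 f) (hgrad : ∀ x, ‖gradient f x‖ ≤ 1)
    (b : ℝ) (hb : 0 < b) (γ γ' : ℝ → E)
    (hγ : ∀ u ∈ Icc (0:ℝ) b, HasDerivWithinAt γ (γ' u) (Icc (0:ℝ) b) u)
    (hγ' : ContinuousOn γ' (Icc (0:ℝ) b))
    (hloop : γ 0 = γ b) :
    (∫ u in (0:ℝ)..b,
      ((1/2) * ‖γ' u - (2 * u) • gradient f (γ u)‖ ^ 2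
        + 2 * u ^ 2 * (1 - ‖gradient f (γ u)‖ ^ 2)))
      = (2/3) * b ^ 3
        + ∫ u in (0:ℝ)..b, ((1/2) * ‖γ' u‖ ^ 2 + 2 * (f (γ u) - f (γ 0))) :=
  loop_L_length_expansion_general f hf b hb γ γ' hγ hγ' hloop
end

section
/- Let E be a real inner product space, b > 0, and let γ : [0,b] → E be a C¹ curve with γ(0) = γ(b) = o. Let L := max_{u ∈ [0,b]} ‖γ(u) − o‖. Then ∫₀^b ‖γ'(u)‖² du ≥ 4L²/b. (This is the energy lower bound for a loop in terms of its maximal excursion, used via the Cauchy–Schwarz inequality and the elementary bound 1/u₁ + 1/(b−u₁) ≥ 4/b in the proof of Lemma 2.1.) -/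
/-!
Let the excursion `L` be attained at `u`. The loop covers distance at least `L` both on `[0, u]`
and on `[u, b]`, and by Cauchy–Schwarz covering distance `L` in time `ℓ` costs energy at least
`L² / ℓ`. Hence the energy is at least `L² / u + L² / (b - u) ≥ 4 L² / b`.
-/

open Set Filter Topology MeasureTheory intervalIntegral

theorem sq_intervalIntegral_le_mul_intervalIntegral_sq {f : ℝ → ℝ} {s t : ℝ} (hst : s ≤ t)
    (hf : IntervalIntegrable f volume s t) (hf2 : IntervalIntegrable (fun x => f x ^ 2) volume s t) :
    (∫ x in s..t, f x) ^ 2 ≤ (t - s) * ∫ x in s..t, f x ^ 2 := by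
  rcases hst.eq_or_lt with rfl | hlt
  · simp
  set I := ∫ x in s..t, f x
  set c := I / (t - s)
  have hpos : 0 < t - s := sub_pos.2 hlt
  -- integrate `2 c f - c² ≤ f²` with `c` the mean value of `f`
  have key : ∫ x in s..t, (2 * c * f x - c ^ 2) ≤ ∫ x in s..t, f x ^ 2 :=
    integral_mono_on hst ((hf.const_mul _).sub intervalIntegrable_const) hf2
      fun x _ => by nlinarith [sq_nonneg (f x - c)]
  rw [integral_sub (hf.const_mul _) intervalIntegrable_const, intervalIntegral.integral_const_mul,
    intervalIntegral.integral_const, smul_eq_mul] at key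
  have : 2 * c * I - (t - s) * c ^ 2 = I ^ 2 / (t - s) := by
    simp only [c]; field_simp; ring
  rw [← div_le_iff₀' hpos, ← this]
  exact key

section Curve

variable {E : Type*} [NormedAddCommGroup E] [NormedSpace ℝ E] {γ γ' : ℝ → E} {s t : ℝ}

theorem norm_sub_le_intervalIntegral_norm_deriv (hst : s ≤ t)
    (hγ : ∀ x ∈ Icc s t, HasDerivWithinAt γ (γ' x) (Icc s t) x)
    (hγ' : ContinuousOn γ' (Icc s t)) :
    ‖γ t - γ s‖ ≤ ∫ x in s..t, ‖γ' x‖ := by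
  -- `E` need not be complete: bound `‖γ x - γ s‖` by the primitive of `‖γ'‖` via a fencing argument
  have hGE : ∀ x ∈ Ico s t, Icc s t ∈ 𝓝[≥] x := fun x hx =>
    mem_of_superset (Icc_mem_nhdsGE hx.2) (Icc_subset_Icc_left hx.1)
  have hGT : ∀ x ∈ Ico s t, Icc s t ∈ 𝓝[>] x := fun x hx =>
    nhdsWithin_mono _ Ioi_subset_Ici_self (hGE x hx)
  have hspeed : ContinuousOn (fun x => ‖γ' x‖) (Icc s t) := hγ'.norm
  have hB : ContinuousOn (fun x => ∫ y in s..x, ‖γ' y‖) (Icc s t) := by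
    have := continuousOn_primitive_interval (μ := volume)
      (hspeed.mono (uIcc_of_le hst).subset).integrableOn_uIcc
    rwa [uIcc_of_le hst] at this
  have hB' : ∀ x ∈ Ico s t, HasDerivWithinAt (fun x => ∫ y in s..x, ‖γ' y‖) ‖γ' x‖ (Ici x) x := by
    intro x hx
    refine integral_hasDerivWithinAt_right
      ((hspeed.mono (Icc_subset_Icc_right hx.2.le)).intervalIntegrable_of_Icc hx.1) ?_ ?_
    · exact (hspeed.stronglyMeasurableAtFilter_nhdsWithin measurableSet_Icc x).filter_mono
        (nhdsWithin_le_of_mem (hGT x hx))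
    · exact (hspeed x (Ico_subset_Icc_self hx)).mono_of_mem_nhdsWithin (hGT x hx)
  have hf : ContinuousOn (fun x => γ x - γ s) (Icc s t) := fun x hx =>
    (hγ x hx).continuousWithinAt.sub continuousWithinAt_const
  have hf' : ∀ x ∈ Ico s t, HasDerivWithinAt (fun x => γ x - γ s) (γ' x) (Ici x) x := fun x hx =>
    ((hγ x (Ico_subset_Icc_self hx)).mono_of_mem_nhdsWithin (hGE x hx)).sub_const _
  exact image_norm_le_of_norm_deriv_right_le_deriv_boundary' hf hf' (by simp) hB hB'
    (fun _ _ => le_rfl) (right_mem_Icc.2 hst)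

theorem sq_norm_sub_div_le_intervalIntegral_sq_norm_deriv (hst : s ≤ t)
    (hγ : ∀ x ∈ Icc s t, HasDerivWithinAt γ (γ' x) (Icc s t) x)
    (hγ' : ContinuousOn γ' (Icc s t)) :
    ‖γ t - γ s‖ ^ 2 / (t - s) ≤ ∫ x in s..t, ‖γ' x‖ ^ 2 := by
  rcases hst.eq_or_lt with rfl | hlt
  · simp
  rw [div_le_iff₀' (sub_pos.2 hlt)]
  calc ‖γ t - γ s‖ ^ 2 ≤ (∫ x in s..t, ‖γ' x‖) ^ 2 := by
        gcongr
        exact norm_sub_le_intervalIntegral_norm_deriv hst hγ hγ'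
    _ ≤ (t - s) * ∫ x in s..t, ‖γ' x‖ ^ 2 :=
        sq_intervalIntegral_le_mul_intervalIntegral_sq hst
          (hγ'.norm.intervalIntegrable_of_Icc hst) ((hγ'.norm.pow 2).intervalIntegrable_of_Icc hst)

end Curve

theorem four_div_le_one_div_add_one_div {u b : ℝ} (hu : 0 < u) (hub : u < b) :
    4 / b ≤ 1 / u + 1 / (b - u) := by
  have hbu : 0 < b - u := sub_pos.2 hub
  rw [div_add_div _ _ hu.ne' hbu.ne', div_le_div_iff₀ (hu.trans hub) (mul_pos hu hbu)]
  nlinarith [sq_nonneg (b - 2 * u)]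

/-- Energy lower bound for a C¹ loop based at `o` in terms of its maximal
excursion `L = max_{u ∈ [0,b]} ‖γ(u) − o‖`: one has `∫₀ᵇ ‖γ'(u)‖² du ≥ 4L²/b`. -/
theorem loop_energy_lower_bound
    {E : Type*} [NormedAddCommGroup E] [InnerProductSpace ℝ E]
    (b : ℝ) (hb : 0 < b) (o : E) (γ γ' : ℝ → E)
    (hγ : ∀ u ∈ Icc (0:ℝ) b, HasDerivWithinAt γ (γ' u) (Icc (0:ℝ) b) u)
    (hγ' : ContinuousOn γ' (Icc (0:ℝ) b))
    (h0 : γ 0 = o) (hbo : γ b = o)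
    (L : ℝ) (hL : IsGreatest ((fun u => ‖γ u - o‖) '' Icc (0:ℝ) b) L) :
    4 * L ^ 2 / b ≤ ∫ u in (0:ℝ)..b, ‖γ' u‖ ^ 2 := by
  obtain ⟨⟨u, hu, rfl⟩, -⟩ := hL
  dsimp only
  rcases (norm_nonneg (γ u - o)).eq_or_lt with hL0 | hLpos
  · rw [← hL0]
    simpa using integral_nonneg hb.le fun x _ => sq_nonneg ‖γ' x‖
  have hu0 : 0 < u := hu.1.lt_of_ne (by rintro rfl; simp [h0] at hLpos)
  have hub : u < b := hu.2.lt_of_ne (by rintro rfl; simp [hbo] at hLpos)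
  have hsub₁ : Icc 0 u ⊆ Icc 0 b := Icc_subset_Icc_right hu.2
  have hsub₂ : Icc u b ⊆ Icc 0 b := Icc_subset_Icc_left hu.1
  have h₁ := sq_norm_sub_div_le_intervalIntegral_sq_norm_deriv hu.1
    (fun x hx => (hγ x (hsub₁ hx)).mono hsub₁) (hγ'.mono hsub₁)
  have h₂ := sq_norm_sub_div_le_intervalIntegral_sq_norm_deriv hu.2
    (fun x hx => (hγ x (hsub₂ hx)).mono hsub₂) (hγ'.mono hsub₂)
  rw [h0, sub_zero] at h₁
  rw [hbo, norm_sub_rev] at h₂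
  have hint : ∀ {s t}, Icc s t ⊆ Icc 0 b → s ≤ t →
      IntervalIntegrable (fun x => ‖γ' x‖ ^ 2) volume s t := fun hsub hst =>
    ((hγ'.mono hsub).norm.pow 2).intervalIntegrable_of_Icc hst
  rw [← integral_add_adjacent_intervals (hint hsub₁ hu.1) (hint hsub₂ hu.2)]
  calc 4 * ‖γ u - o‖ ^ 2 / b = ‖γ u - o‖ ^ 2 * (4 / b) := by ring
    _ ≤ ‖γ u - o‖ ^ 2 * (1 / u + 1 / (b - u)) := by
        gcongr; exact four_div_le_one_div_add_one_div hu0 hub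
    _ = ‖γ u - o‖ ^ 2 / u + ‖γ u - o‖ ^ 2 / (b - u) := by ring
    _ ≤ _ := add_le_add h₁ h₂
end

section
/- Let E be a real inner product space, f : E → ℝ continuously differentiable with ‖∇f(x)‖ ≤ 1 for all x ∈ E, let τ > 0, δ ∈ (0,1), d ≥ 0, and let γ : [√τ, (1+δ)√τ] → E be a C¹ curve with constant speed ‖γ'(u)‖ = d/(δ√τ) for all u. Then ∫_{√τ}^{(1+δ)√τ} ( (1/2)‖γ'(u) − 2u·∇f(γ(u))‖² + 2u²(1 − ‖∇f(γ(u))‖²) ) du ≤ d²/(δ√τ) + 10δ·τ^{3/2}. (This estimate on the L-length cost of a constant-speed connecting segment of length d is the core computation in the proof of the triangle inequality, Lemma 2.2.) -/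
open Set MeasureTheory

/-!
Since `‖∇f‖ ≤ 1`, the triangle inequality bounds the integrand at time `u` by
`½v² + 2uv + 2u²`, where `v = d/(δ√τ)` is the speed. Integrating this polynomial over
`[√τ, (1+δ)√τ]` gives `½v²δ√τ + vδ(2+δ)τ + (2/3)((1+δ)³ - 1)τ^{3/2}`, and completing the
square in `v` absorbs the middle term into `½v²δ√τ` plus a multiple of `δτ^{3/2}` that,
together with the last term, stays below `10δτ^{3/2}` for `δ < 1`.
-/

section Pointwise

variable {E : Type*} [NormedAddCommGroup E] [InnerProductSpace ℝ E]

lemma half_norm_sub_smul_sq_add_nonneg (a : E) {b : E} (u : ℝ) (hb : ‖b‖ ≤ 1) :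
    0 ≤ (1/2) * ‖a - (2 * u) • b‖ ^ 2 + 2 * u ^ 2 * (1 - ‖b‖ ^ 2) := by
  have hb2 : ‖b‖ ^ 2 ≤ 1 := pow_le_one₀ (norm_nonneg b) hb
  have : 0 ≤ 2 * u ^ 2 * (1 - ‖b‖ ^ 2) := by nlinarith [sq_nonneg u]
  positivity

lemma half_norm_sub_smul_sq_add_le {a b : E} {u : ℝ} (hu : 0 ≤ u) (hb : ‖b‖ ≤ 1) :
    (1/2) * ‖a - (2 * u) • b‖ ^ 2 + 2 * u ^ 2 * (1 - ‖b‖ ^ 2)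
      ≤ (1/2) * ‖a‖ ^ 2 + 2 * u * ‖a‖ + 2 * u ^ 2 := by
  have htri : ‖a - (2 * u) • b‖ ≤ ‖a‖ + 2 * u * ‖b‖ := by
    simpa [norm_smul, abs_of_nonneg hu] using norm_sub_le a ((2 * u) • b)
  have hsq := pow_le_pow_left₀ (norm_nonneg _) htri 2
  nlinarith [mul_le_mul_of_nonneg_left hb (by positivity : 0 ≤ u * ‖a‖)]

end Pointwise

/-- A nonnegative function that is not integrable has integral `0`, so only the upper bound
needs to be integrable. -/
lemma intervalIntegral.integral_mono_on_of_nonneg {f g : ℝ → ℝ} {a b : ℝ} {μ : Measure ℝ}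
    (hab : a ≤ b) (hf : ∀ x ∈ Icc a b, 0 ≤ f x) (hg : IntervalIntegrable g μ a b)
    (h : ∀ x ∈ Icc a b, f x ≤ g x) :
    ∫ x in a..b, f x ∂μ ≤ ∫ x in a..b, g x ∂μ := by
  rw [intervalIntegral.integral_of_le hab, intervalIntegral.integral_of_le hab]
  have hIoc {p : ℝ → Prop} (hp : ∀ x ∈ Icc a b, p x) : ∀ᵐ x ∂μ.restrict (Ioc a b), p x :=
    (ae_restrict_iff' measurableSet_Ioc).2 (.of_forall fun x hx => hp x (Ioc_subset_Icc_self hx))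
  exact integral_mono_of_nonneg (hIoc hf) hg.1 (hIoc h)

lemma integral_quadratic_dilation (s δ v : ℝ) :
    ∫ u in s..((1 + δ) * s), ((1/2) * v ^ 2 + 2 * u * v + 2 * u ^ 2)
      = (1/2) * v ^ 2 * (δ * s) + v * (δ * (2 + δ)) * s ^ 2
        + (2/3) * ((1 + δ) ^ 3 - 1) * s ^ 3 := by
  have hF (u : ℝ) : HasDerivAt (fun u => (1/2) * v ^ 2 * u + v * u ^ 2 + (2/3) * u ^ 3)
      ((1/2) * v ^ 2 + 2 * u * v + 2 * u ^ 2) u :=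
    ((((hasDerivAt_id u).const_mul ((1/2) * v ^ 2)).add ((hasDerivAt_pow 2 u).const_mul v)).add
      ((hasDerivAt_pow 3 u).const_mul (2/3 : ℝ))).congr_deriv (by norm_num; ring)
  rw [intervalIntegral.integral_eq_sub_of_hasDerivAt (fun u _ => hF u)
    (Continuous.intervalIntegrable (by fun_prop) _ _)]
  ring

lemma integral_quadratic_dilation_le {s δ : ℝ} (hs : 0 < s) (hδ : δ ∈ Ioo (0:ℝ) 1) (v : ℝ) :
    ∫ u in s..((1 + δ) * s), ((1/2) * v ^ 2 + 2 * u * v + 2 * u ^ 2)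
      ≤ v ^ 2 * (δ * s) + 10 * δ * s ^ 3 := by
  obtain ⟨hδ0, hδ1⟩ := hδ
  rw [integral_quadratic_dilation]
  -- the difference is `½δs(v - (2+δ)s)² + δs³(6 - 4δ - 7δ²/6)`
  have hsq : 0 ≤ δ * s * (v - (2 + δ) * s) ^ 2 := by positivity
  have hrest : 0 ≤ δ * s ^ 3 * (6 - 4 * δ - 7/6 * δ ^ 2) := by
    have : 0 ≤ 6 - 4 * δ - 7/6 * δ ^ 2 := by nlinarith
    positivity
  linarith

theorem constant_speed_segment_L_length_upper_bound_general
    {E : Type*} [NormedAddCommGroup E] [InnerProductSpace ℝ E] [CompleteSpace E]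
    (f : E → ℝ) (hgrad : ∀ x, ‖gradient f x‖ ≤ 1)
    (τ δ d : ℝ) (hτ : 0 < τ) (hδ : δ ∈ Ioo (0:ℝ) 1)
    (γ γ' : ℝ → E)
    (hspeed : ∀ u ∈ Icc (Real.sqrt τ) ((1 + δ) * Real.sqrt τ),
      ‖γ' u‖ = d / (δ * Real.sqrt τ)) :
    (∫ u in (Real.sqrt τ)..((1 + δ) * Real.sqrt τ),
      ((1/2) * ‖γ' u - (2 * u) • gradient f (γ u)‖ ^ 2
        + 2 * u ^ 2 * (1 - ‖gradient f (γ u)‖ ^ 2)))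
      ≤ d ^ 2 / (δ * Real.sqrt τ) + 10 * δ * τ ^ ((3:ℝ)/2) := by
  have hτ32 : τ ^ ((3:ℝ)/2) = Real.sqrt τ ^ 3 := by
    rw [Real.rpow_div_two_eq_sqrt _ hτ.le, ← Real.rpow_natCast]; norm_num
  set s := Real.sqrt τ
  set v := d / (δ * s) with hv
  have hs : 0 < s := Real.sqrt_pos.mpr hτ
  have hδs : 0 < δ * s := mul_pos hδ.1 hs
  have hd_sq : d ^ 2 / (δ * s) = v ^ 2 * (δ * s) := by rw [hv]; field_simp
  calc _ ≤ ∫ u in s..((1 + δ) * s), ((1/2) * v ^ 2 + 2 * u * v + 2 * u ^ 2) := by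
        refine intervalIntegral.integral_mono_on_of_nonneg
          (le_mul_of_one_le_left hs.le (by linarith [hδ.1]))
          (fun u _ => half_norm_sub_smul_sq_add_nonneg _ u (hgrad _))
          (Continuous.intervalIntegrable (by fun_prop) _ _) fun u hu => ?_
        rw [← hspeed u hu]
        exact half_norm_sub_smul_sq_add_le (hs.le.trans hu.1) (hgrad _)
    _ ≤ d ^ 2 / (δ * s) + 10 * δ * τ ^ ((3:ℝ)/2) := by
        rw [hd_sq, hτ32]
        exact integral_quadratic_dilation_le hs hδ v

/-- The core computation in the proof of the triangle inequality
(Lemma 2.2): the reparametrized L-length of a constant-speed C¹ segment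
`γ : [√τ, (1+δ)√τ] → E` with speed `d/(δ√τ)` is at most `d²/(δ√τ) + 10δτ^{3/2}`,
assuming `‖∇f‖ ≤ 1` everywhere. -/
theorem constant_speed_segment_L_length_upper_bound
    {E : Type*} [NormedAddCommGroup E] [InnerProductSpace ℝ E] [CompleteSpace E]
    (f : E → ℝ) (hf : ContDiff ℝ 1 f) (hgrad : ∀ x, ‖gradient f x‖ ≤ 1)
    (τ δ d : ℝ) (hτ : 0 < τ) (hδ : δ ∈ Ioo (0:ℝ) 1) (hd : 0 ≤ d)
    (γ γ' : ℝ → E)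
    (hγ : ∀ u ∈ Icc (Real.sqrt τ) ((1 + δ) * Real.sqrt τ),
      HasDerivWithinAt γ (γ' u) (Icc (Real.sqrt τ) ((1 + δ) * Real.sqrt τ)) u)
    (hγ' : ContinuousOn γ' (Icc (Real.sqrt τ) ((1 + δ) * Real.sqrt τ)))
    (hspeed : ∀ u ∈ Icc (Real.sqrt τ) ((1 + δ) * Real.sqrt τ),
      ‖γ' u‖ = d / (δ * Real.sqrt τ)) :
    (∫ u in (Real.sqrt τ)..((1 + δ) * Real.sqrt τ),
      ((1/2) * ‖γ' u - (2 * u) • gradient f (γ u)‖ ^ 2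
        + 2 * u ^ 2 * (1 - ‖gradient f (γ u)‖ ^ 2)))
      ≤ d ^ 2 / (δ * Real.sqrt τ) + 10 * δ * τ ^ ((3:ℝ)/2) :=
  constant_speed_segment_L_length_upper_bound_general f hgrad τ δ d hτ hδ γ γ' hspeed
end

section
/- Let E be a real inner product space, f : E → ℝ continuously differentiable with ‖∇f(x)‖ ≤ 1 for all x ∈ E, let b > 0, and let γ : [0,b] → E be any C¹ curve. Then ‖γ(b) − γ(0)‖² ≤ 4b·∫₀^b ( (1/2)‖γ'(u) − 2u·∇f(γ(u))‖² + 2u²(1 − ‖∇f(γ(u))‖²) ) du + (8/3)b⁴. (Displacement bound for curves in terms of their reparametrized L-length, obtained by combining the Cauchy–Schwarz inequality with the energy bound; used in the proof of Lemma 2.4.) -/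
/-!
By the fundamental theorem of calculus and Cauchy–Schwarz, `‖γ(b) − γ(0)‖² ≤ b ∫₀ᵇ ‖γ'‖²`.
Pointwise, `‖γ'‖ ≤ ‖γ' − 2u∇f‖ + 2u‖∇f‖`, and since `‖∇f‖ ≤ 1` this gives
`‖γ'‖² ≤ 2‖γ' − 2u∇f‖² + 8u²‖∇f‖² ≤ 4 (½‖γ' − 2u∇f‖² + 2u²(1 − ‖∇f‖²)) + 8u²`;
integrating, `∫₀ᵇ 8u² = (8/3)b³`.
-/

open Set MeasureTheory

theorem ContDiff.continuous_gradient_s8 {E : Type*} [NormedAddCommGroup E] [InnerProductSpace ℝ E]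
    [CompleteSpace E] {f : E → ℝ} (hf : ContDiff ℝ 1 f) : Continuous (gradient f) :=
  (InnerProductSpace.toDual ℝ E).symm.continuous.comp (hf.continuous_fderiv one_ne_zero)

theorem sq_intervalIntegral_le_mul_intervalIntegral_sq_s8 {φ : ℝ → ℝ} {a b : ℝ} (hab : a ≤ b)
    (hφ : IntervalIntegrable φ volume a b)
    (hφ2 : IntervalIntegrable (fun x => φ x ^ 2) volume a b) :
    (∫ x in a..b, φ x) ^ 2 ≤ (b - a) * ∫ x in a..b, φ x ^ 2 := by
  -- `c ↦ ∫ (φ - c)²` is a nonnegative quadratic polynomial, so its discriminant is `≤ 0`.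
  have hquad : ∀ c : ℝ, 0 ≤ (b - a) * (c * c) + (-2 * ∫ x in a..b, φ x) * c
      + ∫ x in a..b, φ x ^ 2 := by
    intro c
    have hexpand : ∫ x in a..b, (φ x - c) ^ 2
        = ∫ x in a..b, (φ x ^ 2 - 2 * c * φ x + c ^ 2) :=
      intervalIntegral.integral_congr fun x _ => by ring
    rw [intervalIntegral.integral_add (hφ2.sub (hφ.const_mul _)) intervalIntegrable_const,
      intervalIntegral.integral_sub hφ2 (hφ.const_mul _), intervalIntegral.integral_const_mul,
      intervalIntegral.integral_const, smul_eq_mul] at hexpand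
    nlinarith [intervalIntegral.integral_nonneg (μ := volume) hab fun x _ => sq_nonneg (φ x - c)]
  have := discrim_le_zero hquad
  rw [discrim] at this
  linarith

theorem norm_sub_le_intervalIntegral_norm_of_hasDerivWithinAt {E : Type*}
    [NormedAddCommGroup E] [NormedSpace ℝ E] [CompleteSpace E] {γ γ' : ℝ → E} {a b : ℝ}
    (hab : a ≤ b) (hγ : ∀ u ∈ Icc a b, HasDerivWithinAt γ (γ' u) (Icc a b) u)
    (hγ' : IntervalIntegrable γ' volume a b) :
    ‖γ b - γ a‖ ≤ ∫ u in a..b, ‖γ' u‖ := by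
  have hFTC : ∫ u in a..b, γ' u = γ b - γ a :=
    intervalIntegral.integral_eq_sub_of_hasDeriv_right_of_le hab
      (fun u hu => (hγ u hu).continuousWithinAt)
      (fun u hu => (hγ u (Ioo_subset_Icc_self hu)).mono_of_mem_nhdsWithin
        (Icc_mem_nhdsGT_of_mem ⟨hu.1.le, hu.2⟩)) hγ'
  rw [← hFTC]
  exact intervalIntegral.norm_integral_le_integral_norm hab

theorem norm_sub_sq_le_mul_intervalIntegral_norm_sq_of_hasDerivWithinAt {E : Type*}
    [NormedAddCommGroup E] [NormedSpace ℝ E] [CompleteSpace E] {γ γ' : ℝ → E} {a b : ℝ}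
    (hab : a ≤ b) (hγ : ∀ u ∈ Icc a b, HasDerivWithinAt γ (γ' u) (Icc a b) u)
    (hγ' : IntervalIntegrable γ' volume a b)
    (hγ'2 : IntervalIntegrable (fun u => ‖γ' u‖ ^ 2) volume a b) :
    ‖γ b - γ a‖ ^ 2 ≤ (b - a) * ∫ u in a..b, ‖γ' u‖ ^ 2 :=
  (pow_le_pow_left₀ (norm_nonneg _)
    (norm_sub_le_intervalIntegral_norm_of_hasDerivWithinAt hab hγ hγ') 2).trans
    (sq_intervalIntegral_le_mul_intervalIntegral_sq_s8 hab hγ'.norm hγ'2)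

theorem norm_sq_le_four_mul_add_eight_mul_sq {E : Type*} [NormedAddCommGroup E]
    [NormedSpace ℝ E] (v X : E) (u : ℝ) (hX : ‖X‖ ≤ 1) :
    ‖v‖ ^ 2 ≤ 4 * ((1/2) * ‖v - (2 * u) • X‖ ^ 2 + 2 * u ^ 2 * (1 - ‖X‖ ^ 2)) + 8 * u ^ 2 := by
  have htri : ‖v‖ ≤ ‖v - (2 * u) • X‖ + ‖(2 * u) • X‖ := norm_le_norm_sub_add v _
  have hsmul : ‖(2 * u) • X‖ ^ 2 = 4 * u ^ 2 * ‖X‖ ^ 2 := by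
    rw [norm_smul, mul_pow, Real.norm_eq_abs, sq_abs]
    ring
  have hX2 : ‖X‖ ^ 2 ≤ 1 := pow_le_one₀ (norm_nonneg X) hX
  nlinarith [sq_nonneg (‖v - (2 * u) • X‖ - ‖(2 * u) • X‖), norm_nonneg v,
    mul_le_mul_of_nonneg_left hX2 (sq_nonneg u)]

/-- (Displacement bound used in the proof of Lemma 2.4.) For any C¹ curve
`γ : [0,b] → E` and `‖∇f‖ ≤ 1`,
`‖γ(b) − γ(0)‖² ≤ 4b ∫₀ᵇ ( ½‖γ' − 2u∇f(γ)‖² + 2u²(1 − ‖∇f(γ)‖²) ) + (8/3)b⁴`. -/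
theorem displacement_le_L_length
    {E : Type*} [NormedAddCommGroup E] [InnerProductSpace ℝ E] [CompleteSpace E]
    (f : E → ℝ) (hf : ContDiff ℝ 1 f) (hgrad : ∀ x, ‖gradient f x‖ ≤ 1)
    (b : ℝ) (hb : 0 < b) (γ γ' : ℝ → E)
    (hγ : ∀ u ∈ Icc (0:ℝ) b, HasDerivWithinAt γ (γ' u) (Icc (0:ℝ) b) u)
    (hγ' : ContinuousOn γ' (Icc (0:ℝ) b)) :
    ‖γ b - γ 0‖ ^ 2
      ≤ 4 * b * (∫ u in (0:ℝ)..b,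
          ((1/2) * ‖γ' u - (2 * u) • gradient f (γ u)‖ ^ 2
            + 2 * u ^ 2 * (1 - ‖gradient f (γ u)‖ ^ 2)))
        + (8/3) * b ^ 4 := by
  have hIcc : uIcc 0 b = Icc 0 b := uIcc_of_le hb.le
  have hX : ContinuousOn (fun u => gradient f (γ u)) (Icc 0 b) :=
    hf.continuous_gradient_s8.comp_continuousOn fun u hu => (hγ u hu).continuousWithinAt
  have hL : IntervalIntegrable (fun u => (1/2) * ‖γ' u - (2 * u) • gradient f (γ u)‖ ^ 2
      + 2 * u ^ 2 * (1 - ‖gradient f (γ u)‖ ^ 2)) volume 0 b := by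
    refine ContinuousOn.intervalIntegrable (hIcc ▸ ?_)
    fun_prop
  have hγ'2 : IntervalIntegrable (fun u => ‖γ' u‖ ^ 2) volume 0 b :=
    ContinuousOn.intervalIntegrable (hIcc ▸ hγ'.norm.pow 2)
  have hsq : IntervalIntegrable (fun u : ℝ => 8 * u ^ 2) volume 0 b :=
    (continuous_const.mul (continuous_pow 2)).intervalIntegrable 0 b
  have henergy : ∫ u in (0:ℝ)..b, ‖γ' u‖ ^ 2 ≤ ∫ u in (0:ℝ)..b,
      (4 * ((1/2) * ‖γ' u - (2 * u) • gradient f (γ u)‖ ^ 2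
        + 2 * u ^ 2 * (1 - ‖gradient f (γ u)‖ ^ 2)) + 8 * u ^ 2) :=
    intervalIntegral.integral_mono_on hb.le hγ'2 ((hL.const_mul 4).add hsq)
      fun u _ => norm_sq_le_four_mul_add_eight_mul_sq _ _ u (hgrad _)
  rw [intervalIntegral.integral_add (hL.const_mul 4) hsq, intervalIntegral.integral_const_mul,
    intervalIntegral.integral_const_mul, integral_pow] at henergy
  calc ‖γ b - γ 0‖ ^ 2 ≤ (b - 0) * ∫ u in (0:ℝ)..b, ‖γ' u‖ ^ 2 :=
        norm_sub_sq_le_mul_intervalIntegral_norm_sq_of_hasDerivWithinAt hb.le hγ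
          (ContinuousOn.intervalIntegrable (hIcc ▸ hγ')) hγ'2
    _ ≤ _ := by linarith [mul_le_mul_of_nonneg_left henergy hb.le]
end

section
/- Let n ≥ 1 be a natural number, A > 0, r > 10A, and let τ₁ > τ₂ > ⋯ > τ_N > 0 (N ≥ 2) be real numbers with τ₁ = r, satisfying τ_j − τ_{j+1} = √(Aτ_j) + √(Aτ_{j+1}) for all 1 ≤ j ≤ N−1, and τ_N < r/10. Then Σ_{j=1}^{N} τ_j^{n/2} ≥ (9 / (10(n+1)√A)) · r^{(n+1)/2}. (This summation estimate is the final step in the proof of Theorem 1.1: combined with the volume lower bound |B(x_j, √(Aτ_j))| ≥ c(n)e^{μ∞}τ_j^{n/2} of Lemma 2.5 and the pairwise disjointness of these balls, it yields the optimal volume growth lower bound |B_{2r}(o)| ≥ c(n, μ∞) r^{(n+1)/2} for steady gradient Ricci solitons with bounded Nash entropy.) -/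
open Set

lemma rpow_half_nat (t : ℝ) (ht : 0 ≤ t) (m : ℕ) :
    t ^ ((m : ℝ) / 2) = Real.sqrt t ^ m := by
  rw [Real.sqrt_eq_rpow, ← Real.rpow_natCast (t ^ (1/2 : ℝ)) m, ← Real.rpow_mul ht]
  ring_nf

lemma pow_sub_pow_le_aux {a b : ℝ} (n : ℕ) (hb : 0 ≤ b) (hab : b ≤ a) :
    a ^ (n + 1) - b ^ (n + 1) ≤ (n + 1) * a ^ n * (a - b) := by
  have ha : 0 ≤ a := hb.trans hab
  rw [← geom_sum₂_mul a b (n + 1)]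
  apply mul_le_mul_of_nonneg_right _ (by linarith)
  calc ∑ i ∈ Finset.range (n + 1), a ^ i * b ^ (n + 1 - 1 - i)
      ≤ ∑ _i ∈ Finset.range (n + 1), a ^ n := by
        apply Finset.sum_le_sum
        intro i hi
        have hi' : i ≤ n := Nat.lt_succ_iff.mp (Finset.mem_range.mp hi)
        have h1 : a ^ i * b ^ (n + 1 - 1 - i) ≤ a ^ i * a ^ (n + 1 - 1 - i) :=
          mul_le_mul_of_nonneg_left (pow_le_pow_left₀ hb hab _) (pow_nonneg ha i)
        have h2 : a ^ i * a ^ (n + 1 - 1 - i) = a ^ n := by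
          rw [← pow_add]
          congr 1
          omega
        linarith
    _ = (n + 1) * a ^ n := by
        rw [Finset.sum_const, Finset.card_range]
        push_cast
        ring

/-- The final summation estimate in the proof of Theorem 1.1: if
`τ₁ = r > 10A`, the sequence `τ_j` is strictly decreasing and positive with
`τ_j − τ_{j+1} = √(Aτ_j) + √(Aτ_{j+1})` for `1 ≤ j ≤ N−1`, and `τ_N < r/10`, then
`Σ_{j=1}^{N} τ_j^{n/2} ≥ (9/(10(n+1)√A)) r^{(n+1)/2}`. -/
theorem sum_tau_pow_lower_bound
    (n : ℕ) (hn : 1 ≤ n) (A r : ℝ) (hA : 0 < A) (hr : 10 * A < r)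
    (N : ℕ) (hN : 2 ≤ N) (τ : ℕ → ℝ)
    (hfirst : τ 1 = r)
    (hpos : ∀ j, 1 ≤ j → j ≤ N → 0 < τ j)
    (hdec : ∀ j, 1 ≤ j → j + 1 ≤ N → τ (j + 1) < τ j)
    (hrec : ∀ j, 1 ≤ j → j + 1 ≤ N →
      τ j - τ (j + 1) = Real.sqrt (A * τ j) + Real.sqrt (A * τ (j + 1)))
    (hlast : τ N < r / 10) :
    (9 / (10 * (n + 1) * Real.sqrt A)) * r ^ (((n : ℝ) + 1) / 2)
      ≤ ∑ j ∈ Finset.Icc 1 N, τ j ^ ((n : ℝ) / 2) := by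
  have hr0 : 0 < r := lt_trans (by linarith) hr
  set s : ℕ → ℝ := fun j => Real.sqrt (τ j) with hs
  have hsA : 0 < Real.sqrt A := Real.sqrt_pos.mpr hA
  have hs_nonneg : ∀ j, 0 ≤ s j := fun j => Real.sqrt_nonneg _
  -- step: s j - s (j+1) = √A
  have hstep : ∀ j, 1 ≤ j → j + 1 ≤ N → s j - s (j + 1) = Real.sqrt A := by
    intro j hj hjN
    have hpj : 0 < τ j := hpos j hj (by omega)
    have hpj1 : 0 < τ (j + 1) := hpos (j + 1) (by omega) hjN
    have hsq : s j ^ 2 = τ j := Real.sq_sqrt hpj.le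
    have hsq1 : s (j + 1) ^ 2 = τ (j + 1) := Real.sq_sqrt hpj1.le
    have hsum_pos : 0 < s j + s (j + 1) := by
      have : 0 < s j := Real.sqrt_pos.mpr hpj
      have : 0 < s (j + 1) := Real.sqrt_pos.mpr hpj1
      positivity
    have hr1 := hrec j hj hjN
    rw [Real.sqrt_mul hA.le, Real.sqrt_mul hA.le] at hr1
    have key : (s j - s (j + 1)) * (s j + s (j + 1))
        = Real.sqrt A * (s j + s (j + 1)) := by
      have : (s j - s (j + 1)) * (s j + s (j + 1)) = s j ^ 2 - s (j + 1) ^ 2 := by ring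
      rw [this, hsq, hsq1, hr1]
      ring
    exact mul_right_cancel₀ (ne_of_gt hsum_pos) key
  -- telescoping bound
  have hmono : ∀ j, 1 ≤ j → j + 1 ≤ N → s (j + 1) ≤ s j := by
    intro j hj hjN
    have := hstep j hj hjN
    linarith [hsA]
  have hkey : ∀ m : ℕ, 1 ≤ m → m + 1 ≤ N →
      s 1 ^ (n + 1) - s (m + 1) ^ (n + 1)
        ≤ ∑ j ∈ Finset.Icc 1 m, (↑n + 1) * Real.sqrt A * s j ^ n := by
    intro m hm
    induction m with
    | zero => omega
    | succ k ih =>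
      intro hkN
      rcases Nat.eq_or_lt_of_le hm with h1 | h1
      · -- k + 1 = 1, i.e. k = 0
        have hk0 : k = 0 := by omega
        subst hk0
        simp only [Finset.Icc_self, Finset.sum_singleton]
        have h := pow_sub_pow_le_aux (a := s 1) (b := s 2) n (hs_nonneg 2)
          (hmono 1 le_rfl (by omega))
        have hst := hstep 1 le_rfl (by omega)
        calc s 1 ^ (n + 1) - s (0 + 1 + 1) ^ (n + 1)
            = s 1 ^ (n + 1) - s 2 ^ (n + 1) := by norm_num
          _ ≤ (n + 1) * s 1 ^ n * (s 1 - s 2) := h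
          _ = (↑n + 1) * Real.sqrt A * s 1 ^ n := by rw [show s 1 - s 2 = Real.sqrt A from hst]; ring
      · have hk1 : 1 ≤ k := by omega
        have ihk := ih hk1 (by omega)
        rw [Finset.sum_Icc_succ_top (by omega : 1 ≤ k + 1)]
        have h := pow_sub_pow_le_aux (a := s (k + 1)) (b := s (k + 2)) n
          (hs_nonneg (k + 2)) (hmono (k + 1) (by omega) (by omega))
        have hst := hstep (k + 1) (by omega) (by omega)
        have : s (k + 1) ^ (n + 1) - s (k + 1 + 1) ^ (n + 1)
            ≤ (↑n + 1) * Real.sqrt A * s (k + 1) ^ n := by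
          calc s (k + 1) ^ (n + 1) - s (k + 1 + 1) ^ (n + 1)
              ≤ (n + 1) * s (k + 1) ^ n * (s (k + 1) - s (k + 2)) := h
            _ = (↑n + 1) * Real.sqrt A * s (k + 1) ^ n := by
                rw [show s (k+1) - s (k+2) = Real.sqrt A from hst]; ring
        linarith
  obtain ⟨M, hM⟩ : ∃ M, N = M + 1 := ⟨N - 1, by omega⟩
  have hmain := hkey M (by omega) (by omega)
  rw [← hM] at hmain
  -- rewrite the target sum
  have hsum_eq : ∑ j ∈ Finset.Icc 1 N, τ j ^ ((n : ℝ) / 2)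
      = ∑ j ∈ Finset.Icc 1 N, s j ^ n := by
    apply Finset.sum_congr rfl
    intro j hj
    rw [Finset.mem_Icc] at hj
    exact rpow_half_nat (τ j) (hpos j hj.1 hj.2).le n
  rw [hsum_eq]
  -- sum over Icc 1 N ≥ sum over Icc 1 M
  have hsplit : ∑ j ∈ Finset.Icc 1 M, s j ^ n ≤ ∑ j ∈ Finset.Icc 1 N, s j ^ n := by
    apply Finset.sum_le_sum_of_subset_of_nonneg
    · apply Finset.Icc_subset_Icc_right; omega
    · intro j _ _; exact pow_nonneg (hs_nonneg j) n
  -- bound s N ^ (n+1)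
  have hs1 : s 1 = Real.sqrt r := by rw [hs]; simp [hfirst]
  have hsN_le : s N ^ (n + 1) ≤ Real.sqrt r ^ (n + 1) / 10 := by
    have hτN : 0 < τ N := hpos N (by omega) le_rfl
    have h1 : s N ≤ Real.sqrt (r / 10) := Real.sqrt_le_sqrt (by linarith)
    have h2 : s N ^ (n + 1) ≤ Real.sqrt (r / 10) ^ (n + 1) :=
      pow_le_pow_left₀ (hs_nonneg N) h1 _
    have h3 : Real.sqrt (r / 10) = Real.sqrt r / Real.sqrt 10 :=
      Real.sqrt_div hr0.le 10
    have h10 : (1 : ℝ) ≤ Real.sqrt 10 := by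
      rw [show (1:ℝ) = Real.sqrt 1 by simp]
      exact Real.sqrt_le_sqrt (by norm_num)
    have h10pos : (0 : ℝ) < Real.sqrt 10 := by linarith
    have h4 : (10 : ℝ) ≤ Real.sqrt 10 ^ (n + 1) := by
      have : Real.sqrt 10 ^ 2 ≤ Real.sqrt 10 ^ (n + 1) :=
        pow_le_pow_right₀ h10 (by omega)
      rw [Real.sq_sqrt (by norm_num : (0:ℝ) ≤ 10)] at this
      exact this
    have h5 : Real.sqrt (r / 10) ^ (n + 1) = Real.sqrt r ^ (n + 1) / Real.sqrt 10 ^ (n + 1) := by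
      rw [h3, div_pow]
    have h6 : Real.sqrt r ^ (n + 1) / Real.sqrt 10 ^ (n + 1) ≤ Real.sqrt r ^ (n + 1) / 10 := by
      apply div_le_div_of_nonneg_left (pow_nonneg (Real.sqrt_nonneg r) _) (by norm_num)
      exact h4
    linarith
  -- final arithmetic
  have hX : r ^ (((n : ℝ) + 1) / 2) = Real.sqrt r ^ (n + 1) := by
    have := rpow_half_nat r hr0.le (n + 1)
    push_cast at this
    rw [this]
  rw [hX]
  set X := Real.sqrt r ^ (n + 1) with hXdef
  have hXnn : 0 ≤ X := pow_nonneg (Real.sqrt_nonneg r) _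
  have hmain' : 9 / 10 * X ≤ ((n : ℝ) + 1) * Real.sqrt A * ∑ j ∈ Finset.Icc 1 M, s j ^ n := by
    have heq : ∑ j ∈ Finset.Icc 1 M, ((n : ℝ) + 1) * Real.sqrt A * s j ^ n
        = ((n : ℝ) + 1) * Real.sqrt A * ∑ j ∈ Finset.Icc 1 M, s j ^ n := by
      rw [Finset.mul_sum]
    rw [hs1, heq] at hmain
    linarith
  have hpos' : (0 : ℝ) < 10 * ((n : ℝ) + 1) * Real.sqrt A := by positivity
  rw [div_mul_eq_mul_div, div_le_iff₀ hpos']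
  nlinarith [hmain', mul_le_mul_of_nonneg_left hsplit
    (by positivity : (0:ℝ) ≤ ((n : ℝ) + 1) * Real.sqrt A)]
end
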